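/- Let Ψ(x) = xⁿ(1-x)^m on [0,1] with n, m nonnegative integers and n ≠ m. Then F(z) = ∫₀¹ e^{izt} tⁿ(1-t)^m dt has no real zeroes and no pair of zeroes of the form {z₀, conj(z₀)}; more precisely, if F(z₀) = 0 then F(conj(z₀)) ≠ 0. -/

import Mathlib

/-!
Put `w = i z`, so that `Re w = -Im z`. It suffices that `∫₀¹ e^{wt} tⁿ(1-t)^m dt = 0` forces
`(m - n) Re w > 0`: this fails for real `z`, and cannot hold for both `z` and `conj z`.
For real `w` the integral is positive. Otherwise
`u(t) = ∫₀¹ e^{tw(s-1/2)} sⁿ(1-s)^m ds` solves `t u'' + (N+1) u' + q u = 0` with `N = n+m+1`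
and `q(t) = (m-n)/2 · w - t w²/4`, and `u(1) = e^{-w/2} · 0 = 0`. An energy identity then gives
`∫₀¹ t^N ((m-n)/2 - t Re w/2) |u|² = 0`. If `(m-n) Re w ≤ 0`, the weight times `(m-n)/2` is
positive on `(0,1]`, and `u(0) > 0`, so this integral cannot vanish.
-/

open MeasureTheory Complex intervalIntegral
open Set Metric ComplexConjugate

theorem hasDerivAt_integral_cexp_mul {a b : ℝ} {c g : ℝ → ℂ} (hc : Continuous c)
    (hg : Continuous g) (t₀ : ℝ) :
    HasDerivAt (fun t : ℝ => ∫ s in a..b, cexp (t * c s) * g s)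
      (∫ s in a..b, c s * cexp (t₀ * c s) * g s) t₀ := by
  obtain ⟨C, hC⟩ :=
    ((isCompact_closedBall t₀ 1).prod isCompact_uIcc).exists_bound_of_continuousOn
      (f := fun p : ℝ × ℝ => c p.2 * cexp (p.1 * c p.2) * g p.2) (by fun_prop)
  refine (hasDerivAt_integral_of_dominated_loc_of_deriv_le (bound := fun _ => C)
    (ball_mem_nhds t₀ one_pos)
    (.of_forall fun t => (by fun_prop : Continuous _).aestronglyMeasurable)
    ((by fun_prop : Continuous _).intervalIntegrable _ _)
    (by fun_prop : Continuous _).aestronglyMeasurable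
    (.of_forall fun s hs t ht => hC (t, s) ⟨ball_subset_closedBall ht, uIoc_subset_uIcc hs⟩)
    intervalIntegrable_const (.of_forall fun s _ t _ => ?_)).2
  simpa [mul_comm] using ((hasDerivAt_id t).ofReal_comp.mul_const (c s)).cexp.mul_const (g s)

theorem integral_mul_normSq_pos {p : ℝ → ℝ} {u : ℝ → ℂ} (hp : Continuous p)
    (hp0 : ∀ t ∈ Ioc (0:ℝ) 1, 0 < p t) (hu : Continuous u) (hu0 : u 0 ≠ 0) :
    0 < ∫ t in (0:ℝ)..1, p t * normSq (u t) := by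
  obtain ⟨c, hc0, hc⟩ : ∃ c, u c ≠ 0 ∧ c ∈ Ioo (0:ℝ) 1 :=
    (((hu.continuousAt.eventually_ne hu0).filter_mono nhdsWithin_le_nhds).and
      (Ioo_mem_nhdsGT one_pos)).exists
  refine integral_pos one_pos (by fun_prop) (fun t ht => ?_) ⟨c, Ioo_subset_Icc_self hc, ?_⟩
  · exact mul_nonneg (hp0 t ht).le (normSq_nonneg _)
  · exact mul_pos (hp0 c (Ioo_subset_Ioc_self hc)) (normSq_pos.2 hc0)

/-- Energy identity for `t u'' + (N + 1) u' + q u = 0` on `[0, 1]` with `u 1 = 0`: the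
derivative of `t ^ (N + 1) * u' t * conj (u t)` is `t^(N+1) |u'|² - t^N q |u|²`, and the first
term is real. -/
theorem integral_pow_mul_im_mul_normSq_eq_zero (N : ℕ) {u u' u'' q : ℝ → ℂ}
    (hu : ∀ t, HasDerivAt u (u' t) t) (hu' : ∀ t, HasDerivAt u' (u'' t) t) (hq : Continuous q)
    (hode : ∀ t : ℝ, t * u'' t + (N + 1) * u' t + q t * u t = 0) (h1 : u 1 = 0) :
    ∫ t in (0:ℝ)..1, t ^ N * (q t).im * normSq (u t) = 0 := by
  set G' : ℝ → ℂ := fun t => t ^ (N + 1) * normSq (u' t) - t ^ N * q t * normSq (u t)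
  have hG :
      ∀ t, HasDerivAt (fun t : ℝ => (t : ℂ) ^ (N + 1) * u' t * conj (u t)) (G' t) t := by
    intro t
    refine (((hasDerivAt_pow (N + 1) (t : ℂ)).comp_ofReal.mul (hu' t)).mul
      (hu t).star).congr_deriv ?_
    simp only [G', normSq_eq_conj_mul_self, Nat.add_sub_cancel, Complex.star_def, Pi.mul_apply]
    push_cast
    linear_combination ((t : ℂ) ^ N * conj (u t)) * hode t
  have hcu : Continuous u := continuous_iff_continuousAt.2 fun t => (hu t).continuousAt
  have hcu' : Continuous u' := continuous_iff_continuousAt.2 fun t => (hu' t).continuousAt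
  have hG'int : IntervalIntegrable G' volume 0 1 :=
    (by fun_prop : Continuous G').intervalIntegrable _ _
  have hzero : ∫ t in (0:ℝ)..1, G' t = 0 := by
    rw [integral_eq_sub_of_hasDerivAt (fun t _ => hG t) hG'int]
    simp [h1]
  calc ∫ t in (0:ℝ)..1, t ^ N * (q t).im * normSq (u t)
      = -∫ t in (0:ℝ)..1, RCLike.im (G' t) := by
        rw [← intervalIntegral.integral_neg]
        refine integral_congr fun t _ => ?_
        simp [G', ← ofReal_pow]
    _ = 0 := by rw [intervalIntegral_im hG'int, hzero, map_zero, neg_zero]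

noncomputable def betaLaplace (n m : ℕ) (w : ℂ) : ℂ :=
  ∫ t in (0:ℝ)..1, cexp (w * t) * (t : ℂ) ^ n * (1 - (t : ℂ)) ^ m

/-- `centeredLaplace n m w k` is the `k`-th derivative of
`t ↦ e^{-tw/2} * betaLaplace n m (t * w)` (see `centeredLaplace_zero`). -/
noncomputable def centeredLaplace (n m : ℕ) (w : ℂ) (k : ℕ) (t : ℝ) : ℂ :=
  ∫ s in (0:ℝ)..1,
    cexp (t * (w * (s - 1 / 2))) * ((w * (s - 1 / 2)) ^ k * ((s : ℂ) ^ n * (1 - (s : ℂ)) ^ m))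

section

variable {n m : ℕ} {w : ℂ}

theorem betaLaplace_ofReal_ne_zero (x : ℝ) : betaLaplace n m x ≠ 0 := by
  have hpos : 0 < ∫ s in (0:ℝ)..1, Real.exp (x * s) * s ^ n * (1 - s) ^ m := by
    refine intervalIntegral_pos_of_pos_on ((by fun_prop : Continuous _).intervalIntegrable _ _)
      (fun s hs => ?_) one_pos
    have := sub_pos.2 hs.2
    have := hs.1
    positivity
  have hreal :
      betaLaplace n m x = ↑(∫ s in (0:ℝ)..1, Real.exp (x * s) * s ^ n * (1 - s) ^ m) := by
    rw [betaLaplace, ← integral_ofReal]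
    push_cast
    rfl
  rw [hreal]
  exact_mod_cast hpos.ne'

theorem hasDerivAt_centeredLaplace (k : ℕ) (t : ℝ) :
    HasDerivAt (centeredLaplace n m w k) (centeredLaplace n m w (k + 1) t) t :=
  (hasDerivAt_integral_cexp_mul (a := 0) (b := 1) (c := fun s : ℝ => w * (s - 1 / 2))
    (g := fun s : ℝ => (w * (s - 1 / 2)) ^ k * ((s : ℂ) ^ n * (1 - (s : ℂ)) ^ m))
    (by fun_prop) (by fun_prop) t).congr_deriv (integral_congr fun s _ => by ring)

theorem continuous_centeredLaplace (k : ℕ) : Continuous (centeredLaplace n m w k) :=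
  continuous_iff_continuousAt.2 fun t => (hasDerivAt_centeredLaplace k t).continuousAt

theorem centeredLaplace_zero (t : ℝ) :
    centeredLaplace n m w 0 t = cexp (-(t * w) / 2) * betaLaplace n m (t * w) := by
  rw [centeredLaplace, betaLaplace, ← intervalIntegral.integral_const_mul]
  refine integral_congr fun s _ => ?_
  rw [pow_zero, one_mul, show cexp (t * (w * (s - 1 / 2))) = cexp (-(t * w) / 2) * cexp (t * w * s)
    by rw [← Complex.exp_add]; ring_nf]
  ring

theorem centeredLaplace_zero_zero_ne_zero : centeredLaplace n m w 0 0 ≠ 0 := by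
  rw [centeredLaplace_zero]
  simpa using betaLaplace_ofReal_ne_zero (n := n) (m := m) 0

/-- The integrand of the left-hand side is `-w` times the derivative in `s` of
`e^{tw(s-1/2)} sⁿ⁺¹ (1-s)^{m+1}`, which vanishes at both ends. -/
theorem centeredLaplace_ode (t : ℝ) :
    t * centeredLaplace n m w 2 t + (n + m + 2) * centeredLaplace n m w 1 t
      + ((m - n) / 2 * w - t * w ^ 2 / 4) * centeredLaplace n m w 0 t = 0 := by
  set H : ℝ → ℂ := fun s =>
    cexp (t * (w * (s - 1 / 2))) * ((s : ℂ) ^ (n + 1) * (1 - (s : ℂ)) ^ (m + 1))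
  set H' : ℝ → ℂ := fun s => cexp (t * (w * (s - 1 / 2))) *
    (t * w * s ^ (n + 1) * (1 - s) ^ (m + 1) + (n + 1) * s ^ n * (1 - s) ^ (m + 1)
      - (m + 1) * s ^ (n + 1) * (1 - s) ^ m)
  have hH : ∀ s : ℝ, HasDerivAt H (H' s) s := fun s =>
    (((((hasDerivAt_id (s : ℂ)).sub_const (1 / 2)).const_mul w).const_mul (t : ℂ)).cexp.mul
      ((hasDerivAt_pow (n + 1) (s : ℂ)).mul (((hasDerivAt_id (s : ℂ)).const_sub 1).pow (m + 1)))
      ).comp_ofReal.congr_deriv (by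
        simp only [H', id, Nat.add_sub_cancel, Pi.mul_apply, Pi.pow_apply]
        push_cast
        ring)
  have hboundary : ∫ s in (0:ℝ)..1, H' s = 0 := by
    rw [integral_eq_sub_of_hasDerivAt (fun s _ => hH s)
      ((by fun_prop : Continuous H').intervalIntegrable _ _)]
    simp [H]
  have hint : ∀ k, IntervalIntegrable (fun s : ℝ => cexp (t * (w * (s - 1 / 2))) *
      ((w * (s - 1 / 2)) ^ k * ((s : ℂ) ^ n * (1 - (s : ℂ)) ^ m))) volume 0 1 :=
    fun k => (by fun_prop : Continuous _).intervalIntegrable _ _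
  calc _ = ∫ s in (0:ℝ)..1, -w * H' s := by
        simp only [centeredLaplace]
        rw [← intervalIntegral.integral_const_mul, ← intervalIntegral.integral_const_mul,
          ← intervalIntegral.integral_const_mul, ← integral_add ((hint 2).const_mul _)
          ((hint 1).const_mul _), ← integral_add (((hint 2).const_mul _).add
          ((hint 1).const_mul _)) ((hint 0).const_mul _)]
        refine integral_congr fun s _ => ?_
        simp only [H']
        ring
    _ = 0 := by rw [intervalIntegral.integral_const_mul, hboundary, mul_zero]

theorem integral_pow_mul_normSq_centeredLaplace_eq_zero (hw : betaLaplace n m w = 0)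
    (him : w.im ≠ 0) :
    ∫ t in (0:ℝ)..1, t ^ (n + m + 1) * (((m : ℝ) - n) / 2 - t * w.re / 2) *
      normSq (centeredLaplace n m w 0 t) = 0 := by
  have h := integral_pow_mul_im_mul_normSq_eq_zero (n + m + 1) (u := centeredLaplace n m w 0)
    (q := fun t : ℝ => ((m : ℂ) - n) / 2 * w - t * w ^ 2 / 4)
    (hasDerivAt_centeredLaplace 0) (hasDerivAt_centeredLaplace 1) (by fun_prop)
    (fun t => by push_cast; linear_combination centeredLaplace_ode t)
    (by rw [centeredLaplace_zero, ofReal_one, one_mul, hw, mul_zero])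
  refine (mul_right_inj' him).1 ?_
  rw [mul_zero, ← intervalIntegral.integral_const_mul]
  refine (integral_congr fun t _ => ?_).trans h
  simp only [pow_two, sub_im, mul_im, mul_re, sub_re, div_ofNat_re, div_ofNat_im, natCast_re,
    natCast_im, ofReal_re, ofReal_im, sub_self, zero_div, zero_mul, add_zero]
  ring

theorem sub_mul_re_pos_of_betaLaplace_eq_zero (hnm : n ≠ m) (hw : betaLaplace n m w = 0) :
    0 < ((m : ℝ) - n) * w.re := by
  have him : w.im ≠ 0 := fun him => betaLaplace_ofReal_ne_zero w.re <| by
    rwa [← show w = w.re from Complex.ext (by simp) (by simp [him])]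
  have hmn : (m : ℝ) - n ≠ 0 := sub_ne_zero.2 (by exact_mod_cast hnm.symm)
  by_contra! hle
  refine (integral_mul_normSq_pos
    (p := fun t => t ^ (n + m + 1) * (((m : ℝ) - n) / 2 - t * w.re / 2) * (((m : ℝ) - n) / 2))
    (u := centeredLaplace n m w 0) (by fun_prop) (fun t ht => ?_) (continuous_centeredLaplace 0)
    centeredLaplace_zero_zero_ne_zero).ne' ?_
  · have : 0 < (((m : ℝ) - n) / 2 - t * w.re / 2) * (((m : ℝ) - n) / 2) := by
      nlinarith [ht.1, mul_self_pos.2 hmn]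
    simpa only [mul_assoc] using mul_pos (pow_pos ht.1 (n + m + 1)) this
  · simp only [mul_right_comm _ (((m : ℝ) - n) / 2), intervalIntegral.integral_mul_const,
      integral_pow_mul_normSq_centeredLaplace_eq_zero hw him, zero_mul]

end

/-- For `n ≠ m`, `F(z) = ∫₀¹ e^{izt} tⁿ(1-t)^m dt` has no real zeroes and no
conjugate pair of zeroes: if `F(z₀) = 0` then `F(conj z₀) ≠ 0`. -/
theorem stmt14 (n m : ℕ) (hnm : n ≠ m) (F : ℂ → ℂ)
    (hF : ∀ z : ℂ, F z =
      ∫ t in (0:ℝ)..1, Complex.exp (Complex.I * z * t) * (t : ℂ) ^ n * ((1 : ℂ) - t) ^ m) :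
    (∀ x : ℝ, F (x : ℂ) ≠ 0) ∧
    (∀ z₀ : ℂ, F z₀ = 0 → F ((starRingEnd ℂ) z₀) ≠ 0) := by
  have key : ∀ z : ℂ, F z = 0 → 0 < ((m : ℝ) - n) * -z.im := fun z hz => by
    simpa using
      sub_mul_re_pos_of_betaLaplace_eq_zero hnm (w := I * z) (by rwa [betaLaplace, ← hF])
  refine ⟨fun x hx => by simpa using key x hx, fun z hz hz' => ?_⟩
  have hpos := key z hz
  have hpos' := key _ hz'
  rw [conj_im, neg_neg] at hpos'
  linarith
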